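/- Let F be a finite field with q elements, k ≤ m, and let A be a k × m matrix over F satisfying the columns condition over F. Assume the following Ramsey statement as hypothesis: for every r there is M = n(r, q, m) such that every r-coloring of F^M \ {0} admits a monochromatic solution of Ax = 0 with all coordinates nonzero. Assume also the removal lemma for systems over finite fields. Then there is c = c(r, q, m) > 0 such that for all sufficiently large N, every r-coloring of F^N \ {0} yields at least c·q^{N(m−k)} monochromatic solutions of Ax = 0. -/

import Mathlib

/-!
If an `r`-colouring of `F^N \ {0}` had fewer than `δ q^{N(m-k)}` monochromatic solutions, every
colour class would carry that few solutions, so the removal lemma deletes at most `ε q^N`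
vectors from each of the `r m` copies of the classes and leaves them solution-free. The deleted
vectors together with `0` form a set `S` so small that a linear map `F^M → F^N`, built greedily
one basis vector at a time, meets `S` only at `0`. Pulling the colouring back along it, the
Ramsey hypothesis gives a monochromatic solution in `F^M` whose image is a monochromatic solution
in `F^N` avoiding all deleted vectors: a contradiction.
-/

open Finset

/-- The columns condition over a field `F`: after reordering the columns there are indices
`0 = ks 0 < ks 1 < ... < ks t = m` with the first block of columns summing to `0` in `F^k`
and each later block-sum an `F`-linear combination of the preceding columns. -/
def FieldColumnsCondition {F : Type} [Field F] {k m : ℕ}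
    (A : Matrix (Fin k) (Fin m) F) : Prop :=
  ∃ (σ : Equiv.Perm (Fin m)) (t : ℕ) (ks : Fin (t + 1) → ℕ),
    0 < t ∧ ks 0 = 0 ∧ ks (Fin.last t) = m ∧ StrictMono ks ∧
    (∀ r : Fin k, ∑ j ∈ univ.filter (fun j : Fin m => (j : ℕ) < ks 1), A r (σ j) = 0) ∧
    (∀ i : Fin t, (i : ℕ) ≠ 0 → ∃ c : Fin m → F, ∀ r : Fin k,
      ∑ j ∈ univ.filter
        (fun j : Fin m => ks i.castSucc ≤ (j : ℕ) ∧ (j : ℕ) < ks i.succ), A r (σ j) =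
      ∑ j ∈ univ.filter (fun j : Fin m => (j : ℕ) < ks i.castSucc), c j * A r (σ j))

section Avoidance

variable {F V : Type*} [Field F] [Fintype F] [AddCommGroup V] [Module F V] [Fintype V]
  [DecidableEq V]

theorem exists_forall_smul_add_notMem {W : Type*} [AddCommGroup W] [Module F W] [Fintype W]
    (φ : W →ₗ[F] V) (S : Finset V)
    (hS : Fintype.card F * Fintype.card W * #S < Fintype.card V) :
    ∃ u : V, ∀ a : F, a ≠ 0 → ∀ w, a • u + φ w ∉ S := by
  let bad : Finset V := (univ ×ˢ univ ×ˢ S).image fun p : F × W × V => p.1⁻¹ • (p.2.2 - φ p.2.1)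
  have hbad : #bad < #(univ : Finset V) := by
    refine card_image_le.trans_lt ?_
    simpa [card_product, mul_assoc] using hS
  obtain ⟨u, -, hu⟩ := exists_mem_notMem_of_card_lt_card hbad
  refine ⟨u, fun a ha w hmem => hu (mem_image.2 ⟨(a, w, a • u + φ w), by simp [hmem], ?_⟩)⟩
  simp [ha]

theorem exists_linearMap_forall_ne_zero_notMem (S : Finset V) :
    ∀ M : ℕ, Fintype.card F ^ M * #S < Fintype.card V →
      ∃ φ : (Fin M → F) →ₗ[F] V, ∀ x, x ≠ 0 → φ x ∉ S
  | 0, _ => ⟨0, fun x hx => (hx (Subsingleton.elim x 0)).elim⟩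
  | M + 1, hS => by
    obtain ⟨φ, hφ⟩ := exists_linearMap_forall_ne_zero_notMem S M
      (lt_of_le_of_lt (Nat.mul_le_mul_right _ (Nat.pow_le_pow_right Fintype.card_pos M.le_succ)) hS)
    obtain ⟨u, hu⟩ := exists_forall_smul_add_notMem φ S (by simpa [pow_succ', mul_assoc] using hS)
    refine ⟨(LinearMap.proj 0).smulRight u + φ ∘ₗ LinearMap.funLeft F F Fin.succ, fun x hx => ?_⟩
    simp only [LinearMap.add_apply, LinearMap.smulRight_apply, LinearMap.coe_comp,
      Function.comp_apply, LinearMap.coe_proj, Function.eval]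
    by_cases h0 : x 0 = 0
    · rw [h0, zero_smul, zero_add]
      exact hφ _ fun htail => hx <| funext <| Fin.cases h0 (congrFun htail)
    · exact hu _ h0 _

end Avoidance

theorem exists_monochromatic_solution_forall_notMem {F V κ : Type*} [Field F] [Fintype F]
    [AddCommGroup V] [Module F V] [Fintype V] [DecidableEq V] {k m M : ℕ}
    (A : Matrix (Fin k) (Fin m) F)
    (hRamsey : ∀ χ : (Fin M → F) → κ, ∃ x : Fin m → (Fin M → F), (∀ j, x j ≠ 0) ∧
      (∀ i, ∑ j, A i j • x j = 0) ∧ ∃ c, ∀ j, χ (x j) = c)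
    (S : Finset V) (hS : Fintype.card F ^ M * #S < Fintype.card V) (χ : V → κ) :
    ∃ y : Fin m → V, (∀ j, y j ∉ S) ∧ (∀ i, ∑ j, A i j • y j = 0) ∧ ∃ c, ∀ j, χ (y j) = c := by
  obtain ⟨φ, hφ⟩ := exists_linearMap_forall_ne_zero_notMem S M hS
  obtain ⟨x, hx0, hx, c, hc⟩ := hRamsey (χ ∘ φ)
  refine ⟨φ ∘ x, fun j => hφ _ (hx0 j), fun i => ?_, c, hc⟩
  simp only [Function.comp_apply, ← map_smul, ← map_sum, hx i, map_zero]

theorem natCard_colorClass_solutions_le {R V κ : Type*} [SMul R V] [AddCommMonoid V] [Fintype V]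
    [DecidableEq V] [DecidableEq κ] {k m : ℕ} (A : Matrix (Fin k) (Fin m) R) (χ : V → κ) (c : κ) :
    Nat.card {x : Fin m → V // (∀ j, x j ∈ ({v | χ v = c ∧ v ≠ 0} : Finset V)) ∧
        ∀ i, ∑ j, A i j • x j = 0} ≤
      Nat.card {x : Fin m → V // (∀ j, x j ≠ 0) ∧ (∀ i, ∑ j, A i j • x j = 0) ∧
        ∃ c, ∀ j, χ (x j) = c} := by
  refine Nat.card_le_card_of_injective _ (Subtype.impEmbedding _ _ fun x hx => ?_).injective
  simp only [mem_filter, mem_univ, true_and] at hx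
  exact ⟨fun j => (hx.1 j).2, hx.2, c, fun j => (hx.1 j).1⟩

theorem card_biUnion_sdiff_le {ι α : Type*} [DecidableEq α] (s : Finset ι) {X X' : ι → Finset α}
    (hX' : ∀ i, X' i ⊆ X i) {b : ℝ} (hb : ∀ i, ((#(X i) - #(X' i) : ℕ) : ℝ) ≤ b) :
    (#(s.biUnion fun i => X i \ X' i) : ℝ) ≤ #s * b := by
  calc (#(s.biUnion fun i => X i \ X' i) : ℝ) ≤ ∑ i ∈ s, (#(X i \ X' i) : ℝ) := by
        exact_mod_cast card_biUnion_le
    _ ≤ ∑ _i ∈ s, b := sum_le_sum fun i _ => by rw [card_sdiff_of_subset (hX' i)]; exact hb i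
    _ = #s * b := by rw [sum_const, nsmul_eq_mul]

/-- `n` deletions of at most `ε q^N` vectors each, with `ε = (4 (n + 1) q^M)⁻¹`, together with the
vector `0`, leave room for the greedy construction of `F^M`. -/
theorem pow_mul_succ_lt_pow {q M N n b : ℕ} (hq : 2 ≤ q) (hMN : M < N)
    (hb : (b : ℝ) ≤ n * ((4 * (n + 1) * q ^ M : ℝ)⁻¹ * q ^ N)) : q ^ M * (b + 1) < q ^ N := by
  have hP : (0 : ℝ) < q ^ M := by positivity
  have h2P : 2 * (q : ℝ) ^ M ≤ q ^ N := by
    have : 2 * q ^ M ≤ q ^ N :=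
      calc 2 * q ^ M ≤ q * q ^ M := Nat.mul_le_mul_right _ hq
        _ = q ^ (M + 1) := (pow_succ' q M).symm
        _ ≤ q ^ N := Nat.pow_le_pow_right (by omega) hMN
    exact_mod_cast this
  have hPb : (q : ℝ) ^ M * b ≤ q ^ N / 4 :=
    calc (q : ℝ) ^ M * b ≤ q ^ M * (n * ((4 * (n + 1) * q ^ M : ℝ)⁻¹ * q ^ N)) := by gcongr
      _ = n / (n + 1) * (q ^ N / 4) := by field_simp
      _ ≤ q ^ N / 4 :=
        mul_le_of_le_one_left (by positivity) (by rw [div_le_one (by positivity)]; linarith)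
  have : (q : ℝ) ^ M * (b + 1) < q ^ N := by linarith
  exact_mod_cast this

theorem stmt18_general (F : Type) [Field F] [Fintype F] (q : ℕ)
    (hq : Fintype.card F = q) (k m : ℕ)
    (A : Matrix (Fin k) (Fin m) F) (r : ℕ)
    -- Ramsey hypothesis
    (hRamsey : ∃ M : ℕ, ∀ χ : (Fin M → F) → Fin r,
      ∃ x : Fin m → (Fin M → F), (∀ j, x j ≠ 0) ∧
        (∀ i : Fin k, ∑ j : Fin m, A i j • x j = 0) ∧
        (∃ c : Fin r, ∀ j, χ (x j) = c))
    -- removal lemma hypothesis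
    (hRemoval : ∀ ε : ℝ, 0 < ε → ∃ δ : ℝ, 0 < δ ∧
      ∀ N : ℕ, ∀ X : Fin m → Finset (Fin N → F),
        (Nat.card {x : Fin m → (Fin N → F) // (∀ i, x i ∈ X i) ∧
            ∀ i : Fin k, ∑ j : Fin m, A i j • x j = 0} : ℝ) ≤
          δ * (q : ℝ) ^ (N * (m - k)) →
        ∃ X' : Fin m → Finset (Fin N → F),
          (∀ i, X' i ⊆ X i) ∧ (∀ i, (((X i).card - (X' i).card : ℕ) : ℝ) ≤ ε * q ^ N) ∧
          ¬ ∃ x : Fin m → (Fin N → F), (∀ i, x i ∈ X' i) ∧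
              ∀ i : Fin k, ∑ j : Fin m, A i j • x j = 0) :
    ∃ c : ℝ, 0 < c ∧ ∃ N₀ : ℕ, ∀ N : ℕ, N₀ ≤ N → ∀ χ : (Fin N → F) → Fin r,
      c * (q : ℝ) ^ (N * (m - k)) ≤
        Nat.card {x : Fin m → (Fin N → F) // (∀ j, x j ≠ 0) ∧
          (∀ i : Fin k, ∑ j : Fin m, A i j • x j = 0) ∧
          (∃ co : Fin r, ∀ j, χ (x j) = co)} := by
  classical
  obtain ⟨M, hM⟩ := hRamsey
  have hq2 : 2 ≤ q := hq ▸ Fintype.one_lt_card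
  have hq0 : (0 : ℝ) < q := by positivity
  obtain ⟨δ, hδ, hremove⟩ := hRemoval (4 * (r * m + 1) * q ^ M : ℝ)⁻¹ (by positivity)
  refine ⟨δ, hδ, M + 1, fun N hN χ => ?_⟩
  by_contra! hfew
  let X : Fin r → Finset (Fin N → F) := fun c => {v | χ v = c ∧ v ≠ 0}
  have hX : ∀ c v, v ∈ X c ↔ χ v = c ∧ v ≠ 0 := by simp [X]
  choose X' hX' hsmall hfree using fun c => hremove N (fun _ => X c)
    ((Nat.cast_le.2 (natCard_colorClass_solutions_le A χ c)).trans hfew.le)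
  let S := insert 0 (univ.biUnion fun p : Fin r × Fin m => X p.1 \ X' p.1 p.2)
  have hS : Fintype.card F ^ M * #S < Fintype.card (Fin N → F) := by
    rw [Fintype.card_fun, Fintype.card_fin, hq]
    refine (Nat.mul_le_mul_left _ (card_insert_le _ _)).trans_lt (pow_mul_succ_lt_pow
      (n := r * m) hq2 hN ?_)
    have hB := card_biUnion_sdiff_le (X := fun p : Fin r × Fin m => X p.1)
      (X' := fun p => X' p.1 p.2) univ (fun p => hX' p.1 p.2) (fun p => hsmall p.1 p.2)
    rw [card_univ, Fintype.card_prod, Fintype.card_fin, Fintype.card_fin] at hB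
    push_cast at hB ⊢
    exact hB
  obtain ⟨y, hyS, hy, c, hc⟩ := exists_monochromatic_solution_forall_notMem A hM S hS χ
  refine hfree c ⟨y, fun j => by_contra fun hj => hyS j ?_, hy⟩
  have hy0 : y j ≠ 0 := fun h => hyS j (h ▸ mem_insert_self _ _)
  exact mem_insert_of_mem <|
    mem_biUnion.2 ⟨(c, j), mem_univ _, mem_sdiff.2 ⟨(hX c _).2 ⟨hc j, hy0⟩, hj⟩⟩

/-- let `F` be a finite field with `q` elements, `k ≤ m`, and `A` a `k × m`
matrix over `F` satisfying the columns condition over `F`. Assume the Ramsey statement (for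
every `r` there is `M` such that every `r`-colouring of `F^M \ {0}` has a monochromatic
solution of `Ax = 0` with nonzero coordinates) and the removal lemma for systems over the
vector spaces `F^N`. Then there is `c = c(r, q, m) > 0` such that for all sufficiently large
`N`, every `r`-colouring of `F^N \ {0}` yields at least `c·q^{N(m−k)}` monochromatic
solutions of `Ax = 0`. -/
theorem stmt18 (F : Type) [Field F] [Fintype F] [DecidableEq F] (q : ℕ)
    (hq : Fintype.card F = q) (k m : ℕ) (hkm : k ≤ m)
    (A : Matrix (Fin k) (Fin m) F) (hA : FieldColumnsCondition A) (r : ℕ) (hr : 0 < r)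
    -- Ramsey hypothesis
    (hRamsey : ∃ M : ℕ, ∀ χ : (Fin M → F) → Fin r,
      ∃ x : Fin m → (Fin M → F), (∀ j, x j ≠ 0) ∧
        (∀ i : Fin k, ∑ j : Fin m, A i j • x j = 0) ∧
        (∃ c : Fin r, ∀ j, χ (x j) = c))
    -- removal lemma hypothesis
    (hRemoval : ∀ ε : ℝ, 0 < ε → ∃ δ : ℝ, 0 < δ ∧
      ∀ N : ℕ, ∀ X : Fin m → Finset (Fin N → F),
        (Nat.card {x : Fin m → (Fin N → F) // (∀ i, x i ∈ X i) ∧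
            ∀ i : Fin k, ∑ j : Fin m, A i j • x j = 0} : ℝ) ≤
          δ * (q : ℝ) ^ (N * (m - k)) →
        ∃ X' : Fin m → Finset (Fin N → F),
          (∀ i, X' i ⊆ X i) ∧ (∀ i, (((X i).card - (X' i).card : ℕ) : ℝ) ≤ ε * q ^ N) ∧
          ¬ ∃ x : Fin m → (Fin N → F), (∀ i, x i ∈ X' i) ∧
              ∀ i : Fin k, ∑ j : Fin m, A i j • x j = 0) :
    ∃ c : ℝ, 0 < c ∧ ∃ N₀ : ℕ, ∀ N : ℕ, N₀ ≤ N → ∀ χ : (Fin N → F) → Fin r,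
      c * (q : ℝ) ^ (N * (m - k)) ≤
        Nat.card {x : Fin m → (Fin N → F) // (∀ j, x j ≠ 0) ∧
          (∀ i : Fin k, ∑ j : Fin m, A i j • x j = 0) ∧
          (∃ co : Fin r, ∀ j, χ (x j) = co)} :=
  stmt18_general F q hq k m A r hRamsey hRemoval
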